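/- Let p < q, a_1,…,a_p > 0, b_1,…,b_q > 0, and suppose e_q(b)/e_p(a) ≤ e_{q-1}(b)/e_{p-1}(a) ≤ ⋯ ≤ e_{q-p+1}(b)/e_1(a) ≤ e_{q-p}(b). Then R(x) = ∏_{i=1}^p (a_i + x) / ∏_{i=1}^q (b_i + x) is nonincreasing on [0, ∞). -/
import Mathlib


open Finset Real MeasureTheory

noncomputable def rise (a : ℝ) (n : ℕ) : ℝ := ∏ k ∈ Finset.range n, (a + k)

noncomputable def esym {q : ℕ} (k : ℕ) (a : Fin q → ℝ) : ℝ :=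
  ∑ s ∈ Finset.powersetCard k (Finset.univ : Finset (Fin q)), ∏ i ∈ s, a i

lemma esym_nonneg' {n : ℕ} (k : ℕ) (a : Fin n → ℝ) (ha : ∀ i, 0 < a i) : 0 ≤ esym k a :=
  Finset.sum_nonneg fun s _ => Finset.prod_nonneg fun i _ => (ha i).le

lemma esym_pos' {n : ℕ} (k : ℕ) (a : Fin n → ℝ) (ha : ∀ i, 0 < a i) (hk : k ≤ n) :
    0 < esym k a := by
  apply Finset.sum_pos (fun s _ => Finset.prod_pos fun i _ => ha i)
  exact Finset.powersetCard_nonempty.2 (by simpa using hk)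

lemma prod_add_eq' {n : ℕ} (a : Fin n → ℝ) (x : ℝ) :
    ∏ i, (a i + x) = ∑ k ∈ Finset.range (n + 1), esym (n - k) a * x ^ k := by
  rw [Finset.prod_add, Finset.sum_powerset,
    ← Finset.sum_range_reflect (fun k => esym (n - k) a * x ^ k) (n + 1)]
  simp only [Finset.card_univ, Fintype.card_fin]
  apply Finset.sum_congr rfl
  intro j hj
  rw [Finset.mem_range] at hj
  have hjn : j ≤ n := by omega
  have h1 : n + 1 - 1 - j = n - j := by omega
  have h2 : n - (n - j) = j := by omega
  rw [h1, h2, esym, Finset.sum_mul]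
  apply Finset.sum_congr rfl
  intro t ht
  rw [Finset.mem_powersetCard] at ht
  rw [Finset.prod_const]
  congr 1
  rw [Finset.card_sdiff_of_subset ht.1, Finset.card_univ, Fintype.card_fin, ht.2]

lemma pow_cross' {x y : ℝ} (hx : 0 ≤ x) (hxy : x ≤ y) {k m : ℕ} (hkm : k ≤ m) :
    y ^ k * x ^ m ≤ x ^ k * y ^ m := by
  have hy : 0 ≤ y := hx.trans hxy
  have h1 : x ^ (m - k) ≤ y ^ (m - k) := pow_le_pow_left₀ hx hxy _
  have hxm : x ^ m = x ^ k * x ^ (m - k) := by rw [← pow_add]; congr 1; omega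
  have hym : y ^ m = y ^ k * y ^ (m - k) := by rw [← pow_add]; congr 1; omega
  have e1 : y ^ k * x ^ m = x ^ k * y ^ k * x ^ (m - k) := by rw [hxm]; ring
  have e2 : x ^ k * y ^ m = x ^ k * y ^ k * y ^ (m - k) := by rw [hym]; ring
  rw [e1, e2]
  exact mul_le_mul_of_nonneg_left h1 (by positivity)

theorem stmt19 (p q : ℕ) (hpq : p < q) (a : Fin p → ℝ) (b : Fin q → ℝ)
    (ha : ∀ i, 0 < a i) (hb : ∀ i, 0 < b i)
    (hchain : ∀ j : ℕ, j < p →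
      esym (q - j) b / esym (p - j) a ≤ esym (q - j - 1) b / esym (p - j - 1) a) :
    AntitoneOn (fun x : ℝ => (∏ i, (a i + x)) / ∏ i, (b i + x)) (Set.Ici 0) := by
  set c : ℕ → ℝ := fun k => if k ≤ p then esym (p - k) a else 0 with hc
  set d : ℕ → ℝ := fun k => esym (q - k) b with hd
  have hcnn : ∀ k, 0 ≤ c k := by
    intro k
    simp only [hc]
    split
    · exact esym_nonneg' _ a ha
    · exact le_refl 0
  have hdnn : ∀ k, 0 ≤ d k := fun k => esym_nonneg' _ b hb
  -- ratio monotonicity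
  have fmono : ∀ k m : ℕ, k ≤ m → m ≤ p →
      esym (q - k) b / esym (p - k) a ≤ esym (q - m) b / esym (p - m) a := by
    intro k m hkm hm
    induction m with
    | zero =>
      have : k = 0 := by omega
      subst this; rfl
    | succ m ih =>
      rcases Nat.lt_or_ge k (m + 1) with h | h
      · have h1 : k ≤ m := by omega
        have h2 : m ≤ p := by omega
        refine (ih h1 h2).trans ?_
        have := hchain m (by omega)
        have e1 : q - m - 1 = q - (m + 1) := by omega
        have e2 : p - m - 1 = p - (m + 1) := by omega
        rwa [e1, e2] at this
      · have : k = m + 1 := by omega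
        subst this; rfl
  have cross : ∀ k m : ℕ, k ≤ m → m ≤ q → c m * d k ≤ c k * d m := by
    intro k m hkm hm
    by_cases hmp : m ≤ p
    · have hkp : k ≤ p := hkm.trans hmp
      simp only [hc, hd, if_pos hmp, if_pos hkp]
      have h := fmono k m hkm hmp
      rw [div_le_div_iff₀ (esym_pos' _ a ha (by omega)) (esym_pos' _ a ha (by omega))] at h
      linarith
    · have hcm : c m = 0 := if_neg hmp
      rw [hcm, zero_mul]
      exact mul_nonneg (hcnn k) (hdnn m)
  intro x hx y hy hxy
  simp only [Set.mem_Ici] at hx hy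
  have hQpos : ∀ z : ℝ, 0 ≤ z → 0 < ∏ i, (b i + z) := by
    intro z hz
    exact Finset.prod_pos fun i _ => by linarith [hb i]
  simp only
  rw [div_le_div_iff₀ (hQpos y hy) (hQpos x hx)]
  have hP : ∀ z : ℝ, ∏ i, (a i + z) = ∑ k ∈ Finset.range (q + 1), c k * z ^ k := by
    intro z
    rw [prod_add_eq']
    have step1 : ∑ k ∈ Finset.range (p + 1), esym (p - k) a * z ^ k =
        ∑ k ∈ Finset.range (p + 1), c k * z ^ k := by
      apply Finset.sum_congr rfl
      intro k hk
      rw [Finset.mem_range] at hk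
      have hkp : k ≤ p := by omega
      simp only [hc, hkp, if_true]
    rw [step1]
    apply Finset.sum_subset (Finset.range_subset_range.2 (by omega : p + 1 ≤ q + 1))
    intro k _ hk
    rw [Finset.mem_range] at hk
    have hkp : ¬ k ≤ p := by omega
    simp only [hc, hkp, if_false, zero_mul]
  have hQ : ∀ z : ℝ, ∏ i, (b i + z) = ∑ k ∈ Finset.range (q + 1), d k * z ^ k := by
    intro z
    rw [prod_add_eq']
  rw [hP, hP, hQ, hQ, Finset.sum_mul_sum, Finset.sum_mul_sum]
  set n := q + 1 with hn
  set g : ℕ → ℕ → ℝ := fun k m => c k * d m * (x ^ k * y ^ m - y ^ k * x ^ m) with hg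
  have hgkey : ∀ k m : ℕ, k ≤ m → m ≤ q → 0 ≤ g k m + g m k := by
    intro k m hkm hm
    have h : g k m + g m k = (c k * d m - c m * d k) * (x ^ k * y ^ m - y ^ k * x ^ m) := by
      simp only [hg]; ring
    rw [h]
    exact mul_nonneg (sub_nonneg.2 (cross k m hkm hm)) (sub_nonneg.2 (pow_cross' hx hxy hkm))
  have hgsym : ∀ k m : ℕ, g k m + g m k = g m k + g k m := fun k m => add_comm _ _
  have hS : 0 ≤ ∑ k ∈ Finset.range n, ∑ m ∈ Finset.range n, g k m := by
    have h2 : (∑ k ∈ Finset.range n, ∑ m ∈ Finset.range n, g k m) +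
        (∑ k ∈ Finset.range n, ∑ m ∈ Finset.range n, g k m) =
        ∑ k ∈ Finset.range n, ∑ m ∈ Finset.range n, (g k m + g m k) := by
      nth_rewrite 2 [Finset.sum_comm]
      rw [← Finset.sum_add_distrib]
      apply Finset.sum_congr rfl
      intro k _
      rw [← Finset.sum_add_distrib]
    have h3 : 0 ≤ ∑ k ∈ Finset.range n, ∑ m ∈ Finset.range n, (g k m + g m k) := by
      apply Finset.sum_nonneg
      intro k hk
      apply Finset.sum_nonneg
      intro m hm
      rw [Finset.mem_range, hn] at hk hm
      rcases le_total k m with h | h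
      · exact hgkey k m h (by omega)
      · rw [hgsym]
        exact hgkey m k h (by omega)
    linarith
  have hdiff : (∑ k ∈ Finset.range n, ∑ m ∈ Finset.range n, c k * x ^ k * (d m * y ^ m)) -
      (∑ k ∈ Finset.range n, ∑ m ∈ Finset.range n, c k * y ^ k * (d m * x ^ m)) =
      ∑ k ∈ Finset.range n, ∑ m ∈ Finset.range n, g k m := by
    rw [← Finset.sum_sub_distrib]
    apply Finset.sum_congr rfl
    intro k _
    rw [← Finset.sum_sub_distrib]
    apply Finset.sum_congr rfl
    intro m _
    simp only [hg]; ring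
  linarith
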